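/- (Lemma 4, second part.) Let κ > 0, let σ satisfy 0 < σ ≤ 1, and let z ∈ ℝ. If κ ≤ σ·τ(z), then τ(−z) ≤ 1 + √C, where C = log(1/(2πκ²)). -/

import Mathlib

open Real MeasureTheory Filter

/-- The standard normal probability density function φ. -/
noncomputable def stdNormalPDF (z : ℝ) : ℝ := (Real.sqrt (2 * Real.pi))⁻¹ * Real.exp (-z ^ 2 / 2)

/-- The standard normal cumulative distribution function Φ. -/
noncomputable def stdNormalCDF (z : ℝ) : ℝ := ∫ t in Set.Iic z, stdNormalPDF t

/-- τ(z) = z Φ(z) + φ(z). -/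
noncomputable def tau (z : ℝ) : ℝ := z * stdNormalCDF z + stdNormalPDF z

/-!
Since `0 ≤ Φ ≤ 1` and `φ ≤ 1`, we have `τ(x) ≤ max x 0 + 1`, so it suffices to show `-z ≤ √C`.
This is trivial for `z ≥ 0`. For `z < 0` the term `zΦ(z)` is nonpositive, so
`κ ≤ σ τ(z) ≤ τ(z) ≤ φ(z)`; taking logarithms turns `κ ≤ φ(z)` into `z² ≤ C`.
-/

lemma stdNormalPDF_eq_gaussianPDFReal : stdNormalPDF = ProbabilityTheory.gaussianPDFReal 0 1 := by
  ext z
  simp [stdNormalPDF, ProbabilityTheory.gaussianPDFReal]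

lemma stdNormalPDF_nonneg (z : ℝ) : 0 ≤ stdNormalPDF z := by
  rw [stdNormalPDF_eq_gaussianPDFReal]
  exact ProbabilityTheory.gaussianPDFReal_nonneg 0 1 z

lemma stdNormalPDF_le_one (z : ℝ) : stdNormalPDF z ≤ 1 := by
  have hexp : Real.exp (-z ^ 2 / 2) ≤ 1 := Real.exp_le_one_iff.2 (by nlinarith [sq_nonneg z])
  have hsqrt : 1 ≤ Real.sqrt (2 * Real.pi) :=
    Real.one_le_sqrt.2 (by nlinarith [Real.pi_gt_three])
  calc stdNormalPDF z ≤ 1 * 1 :=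
        mul_le_mul (inv_le_one_of_one_le₀ hsqrt) hexp (Real.exp_pos _).le zero_le_one
    _ = 1 := one_mul 1

lemma stdNormalCDF_nonneg (z : ℝ) : 0 ≤ stdNormalCDF z :=
  setIntegral_nonneg measurableSet_Iic fun t _ => stdNormalPDF_nonneg t

lemma stdNormalCDF_le_one (z : ℝ) : stdNormalCDF z ≤ 1 := by
  have hint : Integrable stdNormalPDF := by
    rw [stdNormalPDF_eq_gaussianPDFReal]
    exact ProbabilityTheory.integrable_gaussianPDFReal 0 1
  calc stdNormalCDF z ≤ ∫ t, stdNormalPDF t :=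
        setIntegral_le_integral hint (ae_of_all _ stdNormalPDF_nonneg)
    _ = 1 := by
      rw [stdNormalPDF_eq_gaussianPDFReal]
      exact ProbabilityTheory.integral_gaussianPDFReal_eq_one 0 one_ne_zero

lemma tau_le_max_add_one (z : ℝ) : tau z ≤ max z 0 + 1 := by
  have hmul : z * stdNormalCDF z ≤ max z 0 := by
    rcases le_total 0 z with hz | hz
    · nlinarith [stdNormalCDF_le_one z, le_max_left z 0]
    · nlinarith [stdNormalCDF_nonneg z, le_max_right z 0]
  unfold tau
  linarith [stdNormalPDF_le_one z]

lemma tau_le_stdNormalPDF_of_nonpos {z : ℝ} (hz : z ≤ 0) : tau z ≤ stdNormalPDF z := by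
  unfold tau
  nlinarith [stdNormalCDF_nonneg z]

lemma sq_le_log_of_le_stdNormalPDF {κ z : ℝ} (hκ : 0 < κ) (h : κ ≤ stdNormalPDF z) :
    z ^ 2 ≤ Real.log (1 / (2 * Real.pi * κ ^ 2)) := by
  have h2pi : 0 < 2 * Real.pi := by positivity
  have hlog : Real.log κ ≤ -(Real.log (2 * Real.pi) / 2) + -z ^ 2 / 2 := by
    have := Real.log_le_log hκ h
    rwa [stdNormalPDF, Real.log_mul (inv_pos.2 (Real.sqrt_pos.2 h2pi)).ne' (Real.exp_pos _).ne',
      Real.log_inv, Real.log_sqrt h2pi.le, Real.log_exp] at this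
  rw [one_div, Real.log_inv, Real.log_mul h2pi.ne' (pow_pos hκ 2).ne', Real.log_pow]
  push_cast
  linarith

theorem lemma4_second_part (κ σ z : ℝ) (hκ : 0 < κ) (hσ0 : 0 < σ) (hσ1 : σ ≤ 1)
    (h : κ ≤ σ * tau z) :
    tau (-z) ≤ 1 + Real.sqrt (Real.log (1 / (2 * Real.pi * κ ^ 2))) := by
  suffices hneg : -z ≤ Real.sqrt (Real.log (1 / (2 * Real.pi * κ ^ 2))) by
    have := tau_le_max_add_one (-z)
    have := max_le hneg (Real.sqrt_nonneg _)
    linarith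
  rcases le_or_gt 0 z with hz | hz
  · linarith [Real.sqrt_nonneg (Real.log (1 / (2 * Real.pi * κ ^ 2)))]
  · have hτ : 0 < tau z := pos_of_mul_pos_right (hκ.trans_le h) hσ0.le
    have hκτ : κ ≤ tau z := h.trans (mul_le_of_le_one_left hτ.le hσ1)
    have hC := sq_le_log_of_le_stdNormalPDF hκ (hκτ.trans (tau_le_stdNormalPDF_of_nonpos hz.le))
    exact (neg_le_abs z).trans (Real.abs_le_sqrt hC)
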